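/- Let 0 < r < R and let Ω := {x ∈ ℝ² : r < |x| < R} be an open annulus (a tubular neighbourhood of the circle of radius (r+R)/2). Define P(x) := m(x) ⊗ m(x) with m(x) := x^⊥ / |x|. Then P is infinitely differentiable on Ω; for every x ∈ Ω the matrix P(x) is symmetric, satisfies P(x)² = P(x), trace P(x) = 1, and P(x) div P(x) = 0; the divergence satisfies |div P(x)| = 1/|x| ≤ 1/r for all x ∈ Ω, so x ↦ |div P(x)|² has finite integral over Ω; and for every x with |x| = r or |x| = R one has P(x) x = 0, i.e. P annihilates the normal direction to ∂Ω. -/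

import Mathlib

open Matrix MeasureTheory

noncomputable section

/-- The outer product `m ⊗ m` of a vector `m ∈ ℝ²`. -/
def outer (m : Fin 2 → ℝ) : Matrix (Fin 2) (Fin 2) ℝ :=
  Matrix.of fun i j => m i * m j

/-- `x^⊥ = (−x₂, x₁)`: rotation of `x ∈ ℝ²` by 90 degrees counterclockwise. -/
def perp (x : Fin 2 → ℝ) : Fin 2 → ℝ := ![-(x 1), x 0]

/-- The Euclidean norm `|x|` on `ℝ²`. -/
def nrm (x : Fin 2 → ℝ) : ℝ := Real.sqrt ((x 0) ^ 2 + (x 1) ^ 2)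

/-- Partial derivative `∂_{x_j} f` of a scalar field on `ℝ²`. -/
def pd (j : Fin 2) (f : (Fin 2 → ℝ) → ℝ) (x : Fin 2 → ℝ) : ℝ :=
  fderiv ℝ f x (Pi.single j 1)

/-- Divergence of a matrix field: `(div P)_i = ∂_{x₁} P_{i1} + ∂_{x₂} P_{i2}`. -/
def matDiv (P : (Fin 2 → ℝ) → Matrix (Fin 2) (Fin 2) ℝ) (x : Fin 2 → ℝ) :
    Fin 2 → ℝ :=
  fun i => pd 0 (fun y => P y i 0) x + pd 1 (fun y => P y i 1) x

/-- The vortex vector field `m(x) = x^⊥/|x|`. -/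
def vortexM (x : Fin 2 → ℝ) : Fin 2 → ℝ := (nrm x)⁻¹ • perp x

/-- The vortex line field `P(x) = m(x) ⊗ m(x)`. -/
def vortexP (x : Fin 2 → ℝ) : Matrix (Fin 2) (Fin 2) ℝ := outer (vortexM x)

-- auxiliary
abbrev pj (k : Fin 2) : (Fin 2 → ℝ) →L[ℝ] ℝ :=
  ContinuousLinearMap.proj k

def pperp : Fin 2 → ((Fin 2 → ℝ) →L[ℝ] ℝ) := ![-pj 1, pj 0]

lemma hasFDerivAt_perp (i : Fin 2) (x : Fin 2 → ℝ) :
    HasFDerivAt (fun y => perp y i) (pperp i) x := by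
  fin_cases i
  · exact ((pj 1).hasFDerivAt (x := x)).neg
  · exact (pj 0).hasFDerivAt (x := x)


lemma hasFDerivAt_S (x : Fin 2 → ℝ) :
    HasFDerivAt (fun y : Fin 2 → ℝ => y 0 ^ 2 + y 1 ^ 2)
      ((x 0 • pj 0 + x 0 • pj 0) + (x 1 • pj 1 + x 1 • pj 1)) x := by
  have h0 := (pj 0).hasFDerivAt (x := x)
  have h1 := (pj 1).hasFDerivAt (x := x)
  have := (h0.mul h0).add (h1.mul h1)
  have hfun : (fun y : Fin 2 → ℝ => y 0 ^ 2 + y 1 ^ 2)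
      = fun y : Fin 2 → ℝ => y 0 * y 0 + y 1 * y 1 := by funext y; ring
  rw [hfun]
  exact this

lemma hasFDerivAt_Sinv (x : Fin 2 → ℝ) (hx : x 0 ^ 2 + x 1 ^ 2 ≠ 0) :
    HasFDerivAt (fun y : Fin 2 → ℝ => (y 0 ^ 2 + y 1 ^ 2)⁻¹)
      ((-(((x 0 ^ 2 + x 1 ^ 2)) ^ 2)⁻¹) •
        ((x 0 • pj 0 + x 0 • pj 0) + (x 1 • pj 1 + x 1 • pj 1))) x :=
  (hasDerivAt_inv hx).comp_hasFDerivAt x (hasFDerivAt_S x)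

lemma vortexP_eq (x : Fin 2 → ℝ) (hx : x 0 ^ 2 + x 1 ^ 2 ≠ 0) (i j : Fin 2) :
    vortexP x i j = perp x i * perp x j * (x 0 ^ 2 + x 1 ^ 2)⁻¹ := by
  have h : nrm x * nrm x = x 0 ^ 2 + x 1 ^ 2 :=
    Real.mul_self_sqrt (by positivity)
  simp only [vortexP, outer, vortexM, Matrix.of_apply, Pi.smul_apply, smul_eq_mul]
  rw [← h, mul_inv]
  ring

lemma matDiv_vortexP (x : Fin 2 → ℝ) (hx : x 0 ^ 2 + x 1 ^ 2 ≠ 0) (i : Fin 2) :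
    matDiv vortexP x i = -(x i) * (x 0 ^ 2 + x 1 ^ 2)⁻¹ := by
  have hev : ∀ᶠ y in nhds x, (y 0 ^ 2 + y 1 ^ 2 : ℝ) ≠ 0 := by
    have hc : ContinuousAt (fun y : Fin 2 → ℝ => y 0 ^ 2 + y 1 ^ 2) x := by fun_prop
    exact hc.eventually_ne hx
  have hpd : ∀ j k : Fin 2, pd k (fun y => vortexP y i j) x =
      perp x i * perp x j *
          (-(((x 0 ^ 2 + x 1 ^ 2)) ^ 2)⁻¹ *
            (x 0 * (Pi.single k (1:ℝ) : Fin 2 → ℝ) 0 + x 0 * (Pi.single k (1:ℝ) : Fin 2 → ℝ) 0 +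
              (x 1 * (Pi.single k (1:ℝ) : Fin 2 → ℝ) 1 + x 1 * (Pi.single k (1:ℝ) : Fin 2 → ℝ) 1))) +
        (x 0 ^ 2 + x 1 ^ 2)⁻¹ *
          (perp x i * pperp j (Pi.single k 1) + perp x j * pperp i (Pi.single k 1)) := by
    intro j k
    have hg : HasFDerivAt
        (fun y : Fin 2 → ℝ => perp y i * perp y j * (y 0 ^ 2 + y 1 ^ 2)⁻¹)
        ((perp x i * perp x j) •
            ((-(((x 0 ^ 2 + x 1 ^ 2)) ^ 2)⁻¹) •
              ((x 0 • pj 0 + x 0 • pj 0) + (x 1 • pj 1 + x 1 • pj 1))) +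
          (x 0 ^ 2 + x 1 ^ 2)⁻¹ • (perp x i • pperp j + perp x j • pperp i)) x :=
      ((hasFDerivAt_perp i x).mul (hasFDerivAt_perp j x)).mul (hasFDerivAt_Sinv x hx)
    have heq : (fun y => vortexP y i j) =ᶠ[nhds x]
        (fun y : Fin 2 → ℝ => perp y i * perp y j * (y 0 ^ 2 + y 1 ^ 2)⁻¹) :=
      hev.mono fun y hy => vortexP_eq y hy i j
    rw [pd, heq.fderiv_eq, hg.fderiv]
    simp [ContinuousLinearMap.add_apply, ContinuousLinearMap.smul_apply]
    ring
  have e0 : (pperp 0) (Pi.single (0 : Fin 2) (1:ℝ)) = 0 := by simp [pperp]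
  have e11 : (pperp 1) (Pi.single (1 : Fin 2) (1:ℝ)) = 0 := by simp [pperp]
  have hsp : perp x 0 = -(x 1) := by simp [perp]
  have hsp1 : perp x 1 = x 0 := by simp [perp]
  have hkey : -(x 1) * pperp i (Pi.single 0 1) + x 0 * pperp i (Pi.single 1 1)
      = -(x i) := by
    fin_cases i <;> simp [pperp]
  rw [matDiv, hpd 0 0, hpd 1 1, e0, e11]
  simp only [hsp, hsp1, Pi.single_apply]
  norm_num
  linear_combination ((x 0 ^ 2 + x 1 ^ 2)⁻¹) * hkey

lemma vortexM_sq (x : Fin 2 → ℝ) (hx : x 0 ^ 2 + x 1 ^ 2 ≠ 0) :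
    vortexM x 0 * vortexM x 0 + vortexM x 1 * vortexM x 1 = 1 := by
  have h : nrm x * nrm x = x 0 ^ 2 + x 1 ^ 2 := Real.mul_self_sqrt (by positivity)
  simp only [vortexM, Pi.smul_apply, smul_eq_mul, perp]
  have h2 : (nrm x)⁻¹ * (nrm x)⁻¹ = (x 0 ^ 2 + x 1 ^ 2)⁻¹ := by rw [← h, mul_inv]
  calc (nrm x)⁻¹ * ![-(x 1), x 0] 0 * ((nrm x)⁻¹ * ![-(x 1), x 0] 0) +
        (nrm x)⁻¹ * ![-(x 1), x 0] 1 * ((nrm x)⁻¹ * ![-(x 1), x 0] 1)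
      = ((nrm x)⁻¹ * (nrm x)⁻¹) * (x 0 ^ 2 + x 1 ^ 2) := by simp; ring
    _ = 1 := by rw [h2, inv_mul_cancel₀ hx]


/-- On the annulus `Ω = {r < |x| < R}` (a tubular neighbourhood of the circle of
radius `(r+R)/2`), the vortex line field `P(x) = m(x) ⊗ m(x)`, `m(x) = x^⊥/|x|`,
is smooth; pointwise it is a symmetric rank-one projection (`P² = P`,
`trace P = 1`) solving `P div P = 0`; its divergence satisfies
`|div P(x)| = 1/|x| ≤ 1/r`, so `|div P|²` is integrable over `Ω`; and on the
boundary circles `|x| = r`, `|x| = R` one has `P(x) x = 0`. -/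
theorem stmt11 (r R : ℝ) (hr : 0 < r) (hrR : r < R)
    (Ω : Set (Fin 2 → ℝ)) (hΩ : Ω = {x | r < nrm x ∧ nrm x < R}) :
    (∀ i j, ContDiffOn ℝ (⊤ : ℕ∞) (fun y => vortexP y i j) Ω) ∧
    (∀ x ∈ Ω, (vortexP x).IsSymm) ∧
    (∀ x ∈ Ω, vortexP x * vortexP x = vortexP x) ∧
    (∀ x ∈ Ω, (vortexP x).trace = 1) ∧
    (∀ x ∈ Ω, (vortexP x) *ᵥ (matDiv vortexP x) = 0) ∧
    (∀ x ∈ Ω, Real.sqrt ((matDiv vortexP x 0) ^ 2 + (matDiv vortexP x 1) ^ 2)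
        = (nrm x)⁻¹ ∧ (nrm x)⁻¹ ≤ r⁻¹) ∧
    IntegrableOn
      (fun x => (matDiv vortexP x 0) ^ 2 + (matDiv vortexP x 1) ^ 2) Ω volume ∧
    (∀ x : Fin 2 → ℝ, nrm x = r ∨ nrm x = R → (vortexP x) *ᵥ x = 0) := by
  subst hΩ
  have hSne : ∀ x : Fin 2 → ℝ, r < nrm x → x 0 ^ 2 + x 1 ^ 2 ≠ 0 := by
    intro x hx
    have h0 : 0 < nrm x := lt_trans hr hx
    have := Real.sqrt_pos.mp h0
    exact ne_of_gt this
  have hPx : ∀ x : Fin 2 → ℝ, (vortexP x) *ᵥ x = 0 := by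
    intro x
    funext i
    simp [vortexP, outer, vortexM, Matrix.mulVec, dotProduct, Fin.sum_univ_two, perp]
    ring
  refine ⟨?_, ?_, ?_, ?_, ?_, ?_, ?_, fun x _ => hPx x⟩
  · -- smoothness
    intro i j
    have hcoord : ∀ k : Fin 2, ContDiff ℝ (⊤ : WithTop ℕ∞) (fun y : Fin 2 → ℝ => y k) :=
      fun k => (pj k).contDiff
    have hperp : ∀ k : Fin 2, ContDiff ℝ (⊤ : WithTop ℕ∞) (fun y : Fin 2 → ℝ => perp y k) := by
      intro k
      fin_cases k
      · simpa [perp] using (hcoord 1).neg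
      · simpa [perp] using hcoord 0
    have hS : ContDiff ℝ (⊤ : WithTop ℕ∞) (fun y : Fin 2 → ℝ => y 0 ^ 2 + y 1 ^ 2) :=
      ((hcoord 0).pow 2).add ((hcoord 1).pow 2)
    have hg : ContDiffOn ℝ (⊤ : WithTop ℕ∞)
        (fun y : Fin 2 → ℝ => perp y i * perp y j * (y 0 ^ 2 + y 1 ^ 2)⁻¹)
        {x | r < nrm x ∧ nrm x < R} :=
      (((hperp i).mul (hperp j)).contDiffOn).mul
        (hS.contDiffOn.inv fun x hx => hSne x hx.1)
    exact (hg.congr fun x hx => vortexP_eq x (hSne x hx.1) i j).of_le le_top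
  · -- symmetric
    intro x _
    show (vortexP x)ᵀ = vortexP x
    ext i j
    simp [vortexP, outer, Matrix.transpose_apply, mul_comm]
  · -- projection
    intro x hx
    have hm := vortexM_sq x (hSne x hx.1)
    ext i j
    simp only [Matrix.mul_apply, Fin.sum_univ_two, vortexP, outer, Matrix.of_apply]
    calc vortexM x i * vortexM x 0 * (vortexM x 0 * vortexM x j) +
          vortexM x i * vortexM x 1 * (vortexM x 1 * vortexM x j)
        = (vortexM x 0 * vortexM x 0 + vortexM x 1 * vortexM x 1) *
            (vortexM x i * vortexM x j) := by ring
      _ = vortexM x i * vortexM x j := by rw [hm, one_mul]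
  · -- trace
    intro x hx
    have hm := vortexM_sq x (hSne x hx.1)
    simp only [Matrix.trace, Fin.sum_univ_two, Matrix.diag, vortexP, outer, Matrix.of_apply]
    linarith
  · -- P div P = 0
    intro x hx
    have hd : ∀ i, matDiv vortexP x i = -(x i) * (x 0 ^ 2 + x 1 ^ 2)⁻¹ :=
      matDiv_vortexP x (hSne x hx.1)
    funext i
    simp only [Matrix.mulVec, dotProduct, Fin.sum_univ_two, hd]
    have := congrFun (hPx x) i
    simp only [Matrix.mulVec, dotProduct, Fin.sum_univ_two, Pi.zero_apply] at this
    calc vortexP x i 0 * (-(x 0) * (x 0 ^ 2 + x 1 ^ 2)⁻¹) +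
          vortexP x i 1 * (-(x 1) * (x 0 ^ 2 + x 1 ^ 2)⁻¹)
        = -((x 0 ^ 2 + x 1 ^ 2)⁻¹) * (vortexP x i 0 * x 0 + vortexP x i 1 * x 1) := by ring
      _ = 0 := by rw [this]; ring
  · -- norm of divergence
    intro x hx
    have hS0 : (0:ℝ) < x 0 ^ 2 + x 1 ^ 2 :=
      lt_of_le_of_ne (by positivity) (Ne.symm (hSne x hx.1))
    have hd : ∀ i, matDiv vortexP x i = -(x i) * (x 0 ^ 2 + x 1 ^ 2)⁻¹ :=
      matDiv_vortexP x (hSne x hx.1)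
    constructor
    · have h1 : (matDiv vortexP x 0) ^ 2 + (matDiv vortexP x 1) ^ 2
          = (x 0 ^ 2 + x 1 ^ 2)⁻¹ := by
        rw [hd 0, hd 1]
        field_simp
      rw [h1, Real.sqrt_inv, nrm]
    · have h2 : r < nrm x := hx.1
      exact inv_anti₀ hr h2.le
  · -- integrability
    have hnrm : Continuous nrm := by
      have : Continuous fun x : Fin 2 → ℝ => x 0 ^ 2 + x 1 ^ 2 := by fun_prop
      exact Real.continuous_sqrt.comp this
    have hopen : IsOpen {x : Fin 2 → ℝ | r < nrm x ∧ nrm x < R} := by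
      have : {x : Fin 2 → ℝ | r < nrm x ∧ nrm x < R} = nrm ⁻¹' (Set.Ioo r R) := rfl
      rw [this]
      exact isOpen_Ioo.preimage hnrm
    have hmeas := hopen.measurableSet
    have hsub : {x : Fin 2 → ℝ | r < nrm x ∧ nrm x < R} ⊆ Metric.closedBall 0 R := by
      intro x hx
      rw [Metric.mem_closedBall, dist_zero_right]
      rw [pi_norm_le_iff_of_nonneg (le_of_lt (lt_trans hr hrR))]
      intro k
      have h1 : |x k| ≤ nrm x := by
        rw [nrm, ← Real.sqrt_sq_eq_abs]
        apply Real.sqrt_le_sqrt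
        fin_cases k
        · show x 0 ^ 2 ≤ x 0 ^ 2 + x 1 ^ 2
          nlinarith [sq_nonneg (x 1)]
        · show x 1 ^ 2 ≤ x 0 ^ 2 + x 1 ^ 2
          nlinarith [sq_nonneg (x 0)]
      calc ‖x k‖ = |x k| := rfl
        _ ≤ nrm x := h1
        _ ≤ R := hx.2.le
    have hvol : volume {x : Fin 2 → ℝ | r < nrm x ∧ nrm x < R} ≠ ⊤ :=
      ((measure_mono hsub).trans_lt measure_closedBall_lt_top).ne
    have hint : IntegrableOn (fun x : Fin 2 → ℝ => (x 0 ^ 2 + x 1 ^ 2)⁻¹)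
        {x : Fin 2 → ℝ | r < nrm x ∧ nrm x < R} volume := by
      have hScont : Continuous fun x : Fin 2 → ℝ => x 0 ^ 2 + x 1 ^ 2 := by fun_prop
      refine Measure.integrableOn_of_bounded (M := (r ^ 2)⁻¹) hvol
        (hScont.measurable.inv).aestronglyMeasurable ?_
      · rw [ae_restrict_iff' hmeas]
        filter_upwards with x hx
        have hrx : r ^ 2 < x 0 ^ 2 + x 1 ^ 2 := by
          have := hx.1
          have h2 : r < Real.sqrt (x 0 ^ 2 + x 1 ^ 2) := this
          nlinarith [Real.sq_sqrt (show (0:ℝ) ≤ x 0 ^ 2 + x 1 ^ 2 by positivity),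
            Real.sqrt_nonneg (x 0 ^ 2 + x 1 ^ 2)]
        have h0 : (0:ℝ) < x 0 ^ 2 + x 1 ^ 2 := lt_trans (by positivity) hrx
        rw [Real.norm_eq_abs, abs_of_nonneg (by positivity)]
        exact inv_anti₀ (by positivity) hrx.le
    refine hint.congr_fun (fun x hx => ?_) hmeas
    have hne := hSne x hx.1
    rw [matDiv_vortexP x hne 0, matDiv_vortexP x hne 1]
    field_simp
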